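/- If (φ, ψ) is a smooth decaying solution of the canonical equations for the Klein-Gordon field in de Sitter spacetime, then the Hamiltonian density satisfies ∂_t𝓗 = nH𝓗 + c²e^{−2Ht}Σ_i ∂_i{ψ(∂_iφ)} − 𝓗*, where 𝓗* := H{cn e^{−nHt}ψ² + c e^{(n−2)Ht}|∇φ|²}; consequently the Hamiltonian H_C(t) = ∫𝓗 dx satisfies ∂_t H_C(t) = nH·H_C(t) − ∫𝓗* dx. -/

import Mathlib

open Real MeasureTheory

section Aux
variable {n : ℕ}

theorem aux_fderiv_fix_t {f : ℝ × (Fin n → ℝ) → ℝ} (hf : ContDiff ℝ (⊤ : ℕ∞) f) (t : ℝ)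
    (x : Fin n → ℝ) (v : Fin n → ℝ) :
    fderiv ℝ (fun y => f (t, y)) x v = fderiv ℝ f (t, x) (0, v) := by
  have h : HasFDerivAt (fun y => f (t, y))
      ((fderiv ℝ f (t, x)).comp (ContinuousLinearMap.inr ℝ ℝ (Fin n → ℝ))) x :=
    (hf.differentiable (by simp) (t, x)).hasFDerivAt.comp x (hasFDerivAt_prodMk_right t x)
  rw [h.fderiv]; rfl

theorem aux_symm {f : ℝ × (Fin n → ℝ) → ℝ} (hf : ContDiff ℝ (⊤ : ℕ∞) f) (p : ℝ × (Fin n → ℝ))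
    (v w : ℝ × (Fin n → ℝ)) :
    fderiv ℝ (fderiv ℝ f) p v w = fderiv ℝ (fderiv ℝ f) p w v :=
  second_derivative_symmetric (fun y => (hf.differentiable (by simp) y).hasFDerivAt)
    (((hf.fderiv_right (m := (⊤ : ℕ∞)) (by simp)).differentiable (by simp) p).hasFDerivAt) v w

theorem aux_hasDerivAt_fix_x {f : ℝ × (Fin n → ℝ) → ℝ} (hf : ContDiff ℝ (⊤ : ℕ∞) f) (t : ℝ)
    (x : Fin n → ℝ) :
    HasDerivAt (fun s => f (s, x)) (fderiv ℝ f (t, x) (1, 0)) t := by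
  have h := (hf.differentiable (by simp) (t, x)).hasFDerivAt.comp t (hasFDerivAt_prodMk_left (𝕜 := ℝ) t x)
  have h3 : HasFDerivAt (fun s : ℝ => f (s, x))
      ((fderiv ℝ f (t, x)).comp (ContinuousLinearMap.inl ℝ ℝ (Fin n → ℝ))) t := h
  have := h3.hasDerivAt
  simpa using this

theorem aux_hasDerivAt_fderiv {f : ℝ × (Fin n → ℝ) → ℝ} (hf : ContDiff ℝ (⊤ : ℕ∞) f) (t : ℝ)
    (x : Fin n → ℝ) (u : ℝ × (Fin n → ℝ)) :
    HasDerivAt (fun s => fderiv ℝ f (s, x) u) (fderiv ℝ (fderiv ℝ f) (t, x) (1, 0) u) t := by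
  have h1 : HasFDerivAt (fderiv ℝ f) (fderiv ℝ (fderiv ℝ f) (t, x)) (t, x) :=
    (((hf.fderiv_right (m := (⊤ : ℕ∞)) (by simp))).differentiable (by simp) (t, x)).hasFDerivAt
  have h2 := ((ContinuousLinearMap.apply ℝ ℝ u).hasFDerivAt.comp (t, x) h1).comp t
    (hasFDerivAt_prodMk_left (𝕜 := ℝ) t x)
  have h3 : HasFDerivAt (fun s : ℝ => fderiv ℝ f (s, x) u)
      ((((ContinuousLinearMap.apply ℝ ℝ u).comp (fderiv ℝ (fderiv ℝ f) (t, x))).comp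
        (ContinuousLinearMap.inl ℝ ℝ (Fin n → ℝ)))) t := h2
  have := h3.hasDerivAt
  simpa using this

theorem aux_hasFDerivAt_fderiv_fix {f : ℝ × (Fin n → ℝ) → ℝ} (hf : ContDiff ℝ (⊤ : ℕ∞) f) (t : ℝ)
    (x : Fin n → ℝ) (u : ℝ × (Fin n → ℝ)) :
    HasFDerivAt (fun y => fderiv ℝ f (t, y) u)
      ((((ContinuousLinearMap.apply ℝ ℝ u).comp (fderiv ℝ (fderiv ℝ f) (t, x))).comp
        (ContinuousLinearMap.inr ℝ ℝ (Fin n → ℝ)))) x := by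
  have h1 : HasFDerivAt (fderiv ℝ f) (fderiv ℝ (fderiv ℝ f) (t, x)) (t, x) :=
    (((hf.fderiv_right (m := (⊤ : ℕ∞)) (by simp))).differentiable (by simp) (t, x)).hasFDerivAt
  exact ((ContinuousLinearMap.apply ℝ ℝ u).hasFDerivAt.comp (t, x) h1).comp x
    (hasFDerivAt_prodMk_right t x)

theorem aux_fderiv_fderiv {f : ℝ × (Fin n → ℝ) → ℝ} (hf : ContDiff ℝ (⊤ : ℕ∞) f) (t : ℝ)
    (x : Fin n → ℝ) (u : ℝ × (Fin n → ℝ)) (v : Fin n → ℝ) :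
    fderiv ℝ (fun y => fderiv ℝ f (t, y) u) x v = fderiv ℝ (fderiv ℝ f) (t, x) (0, v) u := by
  rw [(aux_hasFDerivAt_fderiv_fix hf t x u).fderiv]; rfl

end Aux

set_option maxHeartbeats 2000000 in
theorem hamiltonian_evolution
    (n : ℕ) (hn : 1 ≤ n) (H c m ℏ : ℝ) (hc : 0 < c) (hm : 0 < m) (hℏ : 0 < ℏ)
    (V V' : ℝ → ℝ) (hV : ∀ r, HasDerivAt V (V' r) r) (hV' : Continuous V') (hV0 : V 0 = 0)
    (φ ψ : ℝ → (Fin n → ℝ) → ℝ)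
    (hφ : ContDiff ℝ (⊤ : ℕ∞) (fun p : ℝ × (Fin n → ℝ) => φ p.1 p.2))
    (hψs : ContDiff ℝ (⊤ : ℕ∞) (fun p : ℝ × (Fin n → ℝ) => ψ p.1 p.2))
    (hdecay : ∃ R : ℝ, ∀ t x, R ≤ ‖x‖ → φ t x = 0 ∧ ψ t x = 0)
    (heq1 : ∀ t x, deriv (fun s => φ s x) t = c * exp (-(n : ℝ) * H * t) * ψ t x)
    (heq2 : ∀ t x, deriv (fun s => ψ s x) t
      = c * exp (((n : ℝ) - 2) * H * t) *
          (∑ j : Fin n, fderiv ℝ (fun y => fderiv ℝ (φ t) y (Pi.single j 1)) x (Pi.single j 1))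
        - c ^ 3 * m ^ 2 / ℏ ^ 2 * exp ((n : ℝ) * H * t) * φ t x
        - c * exp ((n : ℝ) * H * t) * V' (φ t x))
    (Hdens Hstar : ℝ → (Fin n → ℝ) → ℝ)
    (hHdens : Hdens = fun t x => c * exp ((n : ℝ) * H * t) / 2 *
      (exp (-2 * (n : ℝ) * H * t) * (ψ t x) ^ 2
        + exp (-2 * H * t) * ∑ j : Fin n, (fderiv ℝ (φ t) x (Pi.single j 1)) ^ 2
        + c ^ 2 * m ^ 2 / ℏ ^ 2 * (φ t x) ^ 2 + 2 * V (φ t x)))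
    (hHstar : Hstar = fun t x => H * (c * (n : ℝ) * exp (-(n : ℝ) * H * t) * (ψ t x) ^ 2
        + c * exp (((n : ℝ) - 2) * H * t) *
            ∑ j : Fin n, (fderiv ℝ (φ t) x (Pi.single j 1)) ^ 2))
    (HC : ℝ → ℝ) (hHC : ∀ t, HC t = ∫ x : Fin n → ℝ, Hdens t x) :
    (∀ t x, deriv (fun s => Hdens s x) t
      = (n : ℝ) * H * Hdens t x
        + c ^ 2 * exp (-2 * H * t) *
            (∑ j : Fin n, fderiv ℝ
              (fun y => ψ t y * fderiv ℝ (φ t) y (Pi.single j 1)) x (Pi.single j 1))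
        - Hstar t x)
    ∧ (∀ t, deriv HC t = (n : ℝ) * H * HC t - ∫ x : Fin n → ℝ, Hstar t x) := by
  set F : ℝ × (Fin n → ℝ) → ℝ := fun p => φ p.1 p.2 with hF
  set G : ℝ × (Fin n → ℝ) → ℝ := fun p => ψ p.1 p.2 with hG
  -- differentiability of slices
  have hψd : ∀ t (y : Fin n → ℝ), DifferentiableAt ℝ (ψ t) y := fun t y =>
    ((hψs.differentiable (by simp)) (t, y)).comp y
      ((differentiableAt_const t).prodMk differentiableAt_id)
  have hfun : ∀ t (j : Fin n), (fun y => fderiv ℝ (φ t) y (Pi.single j 1))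
      = fun y => fderiv ℝ F (t, y) ((0 : ℝ), Pi.single j 1) :=
    fun t j => funext fun y => aux_fderiv_fix_t hφ t y _
  have hgd : ∀ t x (j : Fin n),
      DifferentiableAt ℝ (fun y => fderiv ℝ (φ t) y (Pi.single j 1)) x := by
    intro t x j
    rw [hfun t j]
    exact (aux_hasFDerivAt_fderiv_fix hφ t x _).differentiableAt
  -- product rule for the divergence term
  have hdiv : ∀ t x (j : Fin n),
      fderiv ℝ (fun y => ψ t y * fderiv ℝ (φ t) y (Pi.single j 1)) x (Pi.single j 1)
      = ψ t x * fderiv ℝ (fun y => fderiv ℝ (φ t) y (Pi.single j 1)) x (Pi.single j 1)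
        + fderiv ℝ (φ t) x (Pi.single j 1) * fderiv ℝ (ψ t) x (Pi.single j 1) := by
    intro t x j
    rw [fderiv_fun_mul (hψd t x) (hgd t x j)]
    simp [smul_eq_mul]
  -- the time-derivative of the Hamiltonian density
  set D : ℝ → (Fin n → ℝ) → ℝ := fun t x =>
    (n : ℝ) * H * (c * exp ((n : ℝ) * H * t) / 2 *
      (exp (-2 * (n : ℝ) * H * t) * (ψ t x) ^ 2
        + exp (-2 * H * t) * ∑ j : Fin n, (fderiv ℝ (φ t) x (Pi.single j 1)) ^ 2
        + c ^ 2 * m ^ 2 / ℏ ^ 2 * (φ t x) ^ 2 + 2 * V (φ t x)))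
      + c ^ 2 * exp (-2 * H * t) *
          (∑ j : Fin n, fderiv ℝ
            (fun y => ψ t y * fderiv ℝ (φ t) y (Pi.single j 1)) x (Pi.single j 1))
      - H * (c * (n : ℝ) * exp (-(n : ℝ) * H * t) * (ψ t x) ^ 2
        + c * exp (((n : ℝ) - 2) * H * t) *
            ∑ j : Fin n, (fderiv ℝ (φ t) x (Pi.single j 1)) ^ 2) with hD
  have key : ∀ t x, HasDerivAt (fun s => c * exp ((n : ℝ) * H * s) / 2 *
      (exp (-2 * (n : ℝ) * H * s) * (ψ s x) ^ 2
        + exp (-2 * H * s) * ∑ j : Fin n, (fderiv ℝ (φ s) x (Pi.single j 1)) ^ 2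
        + c ^ 2 * m ^ 2 / ℏ ^ 2 * (φ s x) ^ 2 + 2 * V (φ s x))) (D t x) t := by
    intro t x
    have hDφ : ∀ s (y : Fin n → ℝ),
        HasDerivAt (fun s' => φ s' y) (c * exp (-(n : ℝ) * H * s) * ψ s y) s := by
      intro s y
      have h : HasDerivAt (fun s' => φ s' y) (fderiv ℝ F (s, y) (1, 0)) s :=
        aux_hasDerivAt_fix_x hφ s y
      have hv : fderiv ℝ F (s, y) (1, 0) = c * exp (-(n : ℝ) * H * s) * ψ s y :=
        h.deriv.symm.trans (heq1 s y)
      exact hv ▸ h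
    have hDψ : ∀ s (y : Fin n → ℝ),
        HasDerivAt (fun s' => ψ s' y)
          (c * exp (((n : ℝ) - 2) * H * s) *
            (∑ j : Fin n, fderiv ℝ (fun z => fderiv ℝ (φ s) z (Pi.single j 1)) y (Pi.single j 1))
          - c ^ 3 * m ^ 2 / ℏ ^ 2 * exp ((n : ℝ) * H * s) * φ s y
          - c * exp ((n : ℝ) * H * s) * V' (φ s y)) s := by
      intro s y
      have h : HasDerivAt (fun s' => ψ s' y) (fderiv ℝ G (s, y) (1, 0)) s :=
        aux_hasDerivAt_fix_x hψs s y
      have hv := h.deriv.symm.trans (heq2 s y)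
      exact hv ▸ h
    have hmix : ∀ (v : Fin n → ℝ),
        fderiv ℝ (fderiv ℝ F) (t, x) ((0 : ℝ), v) ((1 : ℝ), (0 : Fin n → ℝ))
          = c * exp (-(n : ℝ) * H * t) * fderiv ℝ (ψ t) x v := by
      intro v
      have h1 : (fun y => fderiv ℝ F (t, y) ((1 : ℝ), (0 : Fin n → ℝ)))
          = fun y => c * exp (-(n : ℝ) * H * t) * ψ t y := by
        funext y
        exact (aux_hasDerivAt_fix_x hφ t y).deriv.symm.trans (heq1 t y)
      have h2 := aux_fderiv_fderiv hφ t x ((1 : ℝ), (0 : Fin n → ℝ)) v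
      rw [h1] at h2
      rw [← h2, fderiv_const_mul (hψd t x)]
      simp
    have hb : ∀ (v : Fin n → ℝ),
        HasDerivAt (fun s => fderiv ℝ (φ s) x v)
          (c * exp (-(n : ℝ) * H * t) * fderiv ℝ (ψ t) x v) t := by
      intro v
      have h0 : (fun s => fderiv ℝ (φ s) x v) = fun s => fderiv ℝ F (s, x) ((0 : ℝ), v) := by
        funext s; exact aux_fderiv_fix_t hφ s x v
      rw [h0]
      have h := aux_hasDerivAt_fderiv hφ t x ((0 : ℝ), v)
      rwa [aux_symm hφ (t, x) _ _, hmix v] at h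
    have hDV : HasDerivAt (fun s => V (φ s x))
        (V' (φ t x) * (c * exp (-(n : ℝ) * H * t) * ψ t x)) t := (hV (φ t x)).comp t (hDφ t x)
    have hE : ∀ a : ℝ, HasDerivAt (fun s => exp (a * s)) (a * exp (a * t)) t := by
      intro a
      simpa [mul_comm] using ((hasDerivAt_id t).const_mul a).exp
    have T1 := (hE (-2 * (n : ℝ) * H)).mul ((hDψ t x).pow 2)
    have T2 := (hE (-2 * H)).mul
      (HasDerivAt.fun_sum (fun j (_ : j ∈ Finset.univ) => (hb (Pi.single j 1)).pow 2))
    have T3 := ((hDφ t x).pow 2).const_mul (c ^ 2 * m ^ 2 / ℏ ^ 2)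
    have T4 := hDV.const_mul (2 : ℝ)
    have h1 := ((hE ((n : ℝ) * H)).const_mul c).div_const (2 : ℝ)
    have total := h1.mul (((T1.add T2).add T3).add T4)
    rw [hD]
    refine total.congr_deriv ?_
    symm
    simp only [hdiv, Finset.sum_add_distrib, ← Finset.mul_sum]
    norm_num
    have sumlemma : (∑ j : Fin n, (2:ℝ) * fderiv ℝ (φ t) x (Pi.single j 1) *
          (c * exp (-((n : ℝ) * H * t)) * fderiv ℝ (ψ t) x (Pi.single j 1)))
        = 2 * (c * exp (-((n : ℝ) * H * t))) *
          ∑ j : Fin n, fderiv ℝ (φ t) x (Pi.single j 1) * fderiv ℝ (ψ t) x (Pi.single j 1) := by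
      rw [Finset.mul_sum]; exact Finset.sum_congr rfl fun j _ => by ring
    rw [sumlemma]
    generalize (∑ j : Fin n,
      fderiv ℝ (φ t) x (Pi.single j 1) * fderiv ℝ (ψ t) x (Pi.single j 1)) = S2
    generalize (∑ j : Fin n, fderiv ℝ (φ t) x (Pi.single j 1) ^ 2) = S1
    generalize (∑ j : Fin n,
      fderiv ℝ (fun y => fderiv ℝ (φ t) y (Pi.single j 1)) x (Pi.single j 1)) = M
    generalize V (φ t x) = Vv
    generalize V' (φ t x) = Vp
    generalize ψ t x = A
    generalize φ t x = B
    have E1 : exp ((n : ℝ) * H * t) = exp (H * t) ^ n := by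
      rw [mul_assoc, exp_nat_mul]
    have E2 : exp (-((n : ℝ) * H * t)) = (exp (H * t) ^ n)⁻¹ := by
      rw [show -((n : ℝ) * H * t) = -((n : ℝ) * (H * t)) by ring, exp_neg, exp_nat_mul]
    have E3 : exp (-(2 * (n : ℝ) * H * t)) = ((exp (H * t) ^ n)⁻¹) ^ 2 := by
      rw [show -(2 * (n : ℝ) * H * t) = ((2:ℕ) : ℝ) * (-((n : ℝ) * (H * t))) by push_cast; ring,
        exp_nat_mul, exp_neg, exp_nat_mul]
    have E4 : exp (-(2 * H * t)) = (exp (H * t) ^ 2)⁻¹ := by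
      rw [show -(2 * H * t) = -(((2:ℕ) : ℝ) * (H * t)) by push_cast; ring, exp_neg, exp_nat_mul]
    have E5 : exp (((n : ℝ) - 2) * H * t) = exp (H * t) ^ n * (exp (H * t) ^ 2)⁻¹ := by
      rw [show ((n : ℝ) - 2) * H * t = (n : ℝ) * (H * t) + -(((2:ℕ) : ℝ) * (H * t)) by
        push_cast; ring, exp_add, exp_neg, exp_nat_mul, exp_nat_mul]
    rw [E1, E2, E3, E4, E5]
    have hu : (0:ℝ) < exp (H * t) := exp_pos _
    field_simp
    ring
  constructor
  · intro t x
    rw [hHdens, hHstar]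
    exact (key t x).deriv
  · -- part 2: evolution of the total Hamiltonian
    have hHCfun : HC = fun t => ∫ x : Fin n → ℝ, Hdens t x := funext hHC
    intro t₀
    obtain ⟨R, hR⟩ := hdecay
    -- vanishing lemmas
    have hOpen : IsOpen {y : Fin n → ℝ | R < ‖y‖} := isOpen_lt continuous_const continuous_norm
    have hfd0 : ∀ (f : (Fin n → ℝ) → ℝ), (∀ y, R < ‖y‖ → f y = 0) →
        ∀ y, R < ‖y‖ → fderiv ℝ f y = 0 := by
      intro f hf y hy
      have hev : f =ᶠ[nhds y] (fun _ => (0 : ℝ)) :=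
        Filter.eventuallyEq_of_mem (hOpen.mem_nhds hy) hf
      rw [hev.fderiv_eq]
      exact fderiv_const_apply 0
    have hφ0 : ∀ t y, R < ‖y‖ → φ t y = 0 := fun t y h => (hR t y h.le).1
    have hψ0 : ∀ t y, R < ‖y‖ → ψ t y = 0 := fun t y h => (hR t y h.le).2
    have hb0 : ∀ t (j : Fin n) y, R < ‖y‖ → fderiv ℝ (φ t) y (Pi.single j 1) = 0 := by
      intro t j y hy; rw [hfd0 (φ t) (hφ0 t) y hy]; simp
    have hbψ0 : ∀ t (j : Fin n) y, R < ‖y‖ → fderiv ℝ (ψ t) y (Pi.single j 1) = 0 := by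
      intro t j y hy; rw [hfd0 (ψ t) (hψ0 t) y hy]; simp
    have hg0 : ∀ t (j : Fin n) y, R < ‖y‖ →
        fderiv ℝ (fun z => ψ t z * fderiv ℝ (φ t) z (Pi.single j 1)) y (Pi.single j 1) = 0 := by
      intro t j y hy
      rw [hfd0 _ (fun z hz => by rw [hψ0 t z hz]; ring) y hy]; simp
    have hgg0 : ∀ t (j : Fin n) y, R < ‖y‖ →
        fderiv ℝ (fun z => fderiv ℝ (φ t) z (Pi.single j 1)) y (Pi.single j 1) = 0 := by
      intro t j y hy
      rw [hfd0 _ (fun z hz => hb0 t j z hz) y hy]; simp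
    have hHd0 : ∀ t y, R < ‖y‖ → Hdens t y = 0 := by
      intro t y hy
      have hbz : ∀ j : Fin n, fderiv ℝ (φ t) y (Pi.single j 1) = 0 := fun j => hb0 t j y hy
      rw [hHdens]
      simp [hφ0 t y hy, hψ0 t y hy, hV0, hbz]
    have hHs0 : ∀ t y, R < ‖y‖ → Hstar t y = 0 := by
      intro t y hy
      have hbz : ∀ j : Fin n, fderiv ℝ (φ t) y (Pi.single j 1) = 0 := fun j => hb0 t j y hy
      rw [hHstar]
      simp [hψ0 t y hy, hbz]
    have hD0 : ∀ t y, R < ‖y‖ → D t y = 0 := by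
      intro t y hy
      have hbz : ∀ j : Fin n, fderiv ℝ (φ t) y (Pi.single j 1) = 0 := fun j => hb0 t j y hy
      have hgz : ∀ j : Fin n,
          fderiv ℝ (fun z => ψ t z * fderiv ℝ (φ t) z (Pi.single j 1)) y (Pi.single j 1) = 0 :=
        fun j => hg0 t j y hy
      rw [hD]
      simp [hφ0 t y hy, hψ0 t y hy, hV0, hbz, hgz]
    -- support
    set K : Set (Fin n → ℝ) := Metric.closedBall 0 (|R| + 1) with hK
    have hKnorm : ∀ y, y ∉ K → R < ‖y‖ := by
      intro y hy
      rw [hK, Metric.mem_closedBall, dist_zero_right, not_le] at hy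
      calc R ≤ |R| := le_abs_self R
        _ < |R| + 1 := by linarith
        _ < ‖y‖ := hy
    have hKc : IsCompact K := isCompact_closedBall 0 (|R| + 1)
    have hsupp : ∀ f : (Fin n → ℝ) → ℝ, (∀ y, R < ‖y‖ → f y = 0) → HasCompactSupport f :=
      fun f hf => HasCompactSupport.intro hKc (fun y hy => hf y (hKnorm y hy))
    -- continuity building blocks
    have hVd : Differentiable ℝ V := fun r => (hV r).differentiableAt
    have hVc : Continuous V := hVd.continuous
    have hexp : ∀ a : ℝ, Continuous fun p : ℝ × (Fin n → ℝ) => exp (a * p.1) :=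
      fun a => continuous_exp.comp (continuous_const.mul continuous_fst)
    have hc1 : ∀ (u : ℝ × (Fin n → ℝ)), Continuous fun p : ℝ × (Fin n → ℝ) => fderiv ℝ F p u :=
      fun u => ((hφ.fderiv_right (m := (⊤ : ℕ∞)) (by simp)).continuous).clm_apply continuous_const
    have hc1ψ : ∀ (u : ℝ × (Fin n → ℝ)), Continuous fun p : ℝ × (Fin n → ℝ) => fderiv ℝ G p u :=
      fun u => ((hψs.fderiv_right (m := (⊤ : ℕ∞)) (by simp)).continuous).clm_apply continuous_const
    have hc2 : ∀ (u v : ℝ × (Fin n → ℝ)),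
        Continuous fun p : ℝ × (Fin n → ℝ) => fderiv ℝ (fderiv ℝ F) p u v := fun u v =>
      ((((hφ.fderiv_right (m := (⊤ : ℕ∞)) (by simp)).fderiv_right (m := (⊤ : ℕ∞)) (by simp)).continuous).clm_apply
        continuous_const).clm_apply continuous_const
    -- joint continuity of Hdens
    have hHdF : (fun p : ℝ × (Fin n → ℝ) => Hdens p.1 p.2) = fun p =>
        c * exp ((n : ℝ) * H * p.1) / 2 *
          (exp (-2 * (n : ℝ) * H * p.1) * (ψ p.1 p.2) ^ 2
            + exp (-2 * H * p.1) *
                ∑ j : Fin n, (fderiv ℝ F p ((0 : ℝ), Pi.single j 1)) ^ 2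
            + c ^ 2 * m ^ 2 / ℏ ^ 2 * (φ p.1 p.2) ^ 2 + 2 * V (φ p.1 p.2)) := by
      funext p
      obtain ⟨t, x⟩ := p
      have e1 : ∀ j : Fin n, fderiv ℝ (φ t) x (Pi.single j 1)
          = fderiv ℝ F (t, x) ((0 : ℝ), Pi.single j 1) := fun j => aux_fderiv_fix_t hφ t x _
      rw [hHdens]
      simp only [e1]
    have hcontHdens : Continuous (fun p : ℝ × (Fin n → ℝ) => Hdens p.1 p.2) := by
      rw [hHdF]
      exact ((continuous_const.mul (hexp _)).div_const 2).mul
        ((((hexp _).mul (hψs.continuous.pow 2)).add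
          ((hexp _).mul (continuous_finset_sum _ fun j _ => (hc1 _).pow 2)) |>.add
            (continuous_const.mul (hφ.continuous.pow 2))).add
          (continuous_const.mul (hVc.comp hφ.continuous)))
    have hHsF : (fun p : ℝ × (Fin n → ℝ) => Hstar p.1 p.2) = fun p =>
        H * (c * (n : ℝ) * exp (-(n : ℝ) * H * p.1) * (ψ p.1 p.2) ^ 2
          + c * exp (((n : ℝ) - 2) * H * p.1) *
              ∑ j : Fin n, (fderiv ℝ F p ((0 : ℝ), Pi.single j 1)) ^ 2) := by
      funext p
      obtain ⟨t, x⟩ := p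
      have e1 : ∀ j : Fin n, fderiv ℝ (φ t) x (Pi.single j 1)
          = fderiv ℝ F (t, x) ((0 : ℝ), Pi.single j 1) := fun j => aux_fderiv_fix_t hφ t x _
      rw [hHstar]
      simp only [e1]
    have hcontHstar : Continuous (fun p : ℝ × (Fin n → ℝ) => Hstar p.1 p.2) := by
      rw [hHsF]
      exact continuous_const.mul
        (((continuous_const.mul (hexp _)).mul (hψs.continuous.pow 2)).add
          ((continuous_const.mul (hexp _)).mul
            (continuous_finset_sum _ fun j _ => (hc1 _).pow 2)))
    -- joint continuity of D
    have hDF : (fun p : ℝ × (Fin n → ℝ) => D p.1 p.2) = fun p =>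
        (n : ℝ) * H * Hdens p.1 p.2
          + c ^ 2 * exp (-2 * H * p.1) *
              (∑ j : Fin n, (ψ p.1 p.2 *
                  fderiv ℝ (fderiv ℝ F) p ((0 : ℝ), Pi.single j 1) ((0 : ℝ), Pi.single j 1)
                + fderiv ℝ F p ((0 : ℝ), Pi.single j 1) * fderiv ℝ G p ((0 : ℝ), Pi.single j 1)))
          - Hstar p.1 p.2 := by
      funext p
      obtain ⟨t, x⟩ := p
      have e1 : ∀ j : Fin n, fderiv ℝ (φ t) x (Pi.single j 1)
          = fderiv ℝ F (t, x) ((0 : ℝ), Pi.single j 1) := fun j => aux_fderiv_fix_t hφ t x _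
      have e2 : ∀ j : Fin n, fderiv ℝ (ψ t) x (Pi.single j 1)
          = fderiv ℝ G (t, x) ((0 : ℝ), Pi.single j 1) := fun j => aux_fderiv_fix_t hψs t x _
      have e3 : ∀ j : Fin n,
          fderiv ℝ (fun y => fderiv ℝ (φ t) y (Pi.single j 1)) x (Pi.single j 1)
          = fderiv ℝ (fderiv ℝ F) (t, x) ((0 : ℝ), Pi.single j 1) ((0 : ℝ), Pi.single j 1) :=
        fun j => by rw [hfun t j, aux_fderiv_fderiv hφ]
      simp only [hD, hHdens, hHstar, hdiv, e1, e2, e3]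
    have hcontD : Continuous (fun p : ℝ × (Fin n → ℝ) => D p.1 p.2) := by
      rw [hDF]
      exact ((continuous_const.mul hcontHdens).add
        ((continuous_const.mul (hexp _)).mul (continuous_finset_sum _ fun j _ =>
          (hψs.continuous.mul (hc2 _ _)).add ((hc1 _).mul (hc1ψ _))))).sub hcontHstar
    -- slices
    have hsliceC : ∀ (f : ℝ × (Fin n → ℝ) → ℝ), Continuous f →
        ∀ t, Continuous fun y => f (t, y) := fun f hf t =>
      hf.comp (continuous_const.prodMk continuous_id)
    have hHdC : ∀ t, Continuous fun y => Hdens t y := fun t =>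
      hsliceC _ hcontHdens t
    have hHsC : ∀ t, Continuous fun y => Hstar t y := fun t =>
      hsliceC _ hcontHstar t
    have hDC : ∀ t, Continuous fun y => D t y := fun t =>
      hsliceC _ hcontD t
    -- integrability
    have hIntHd : ∀ t, Integrable (fun y => Hdens t y) :=
      fun t => (hHdC t).integrable_of_hasCompactSupport (hsupp _ (hHd0 t))
    have hIntHs : ∀ t, Integrable (fun y => Hstar t y) :=
      fun t => (hHsC t).integrable_of_hasCompactSupport (hsupp _ (hHs0 t))
    -- dominated convergence setup
    obtain ⟨C, hC⟩ := (isCompact_Icc.prod hKc).exists_bound_of_continuousOn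
      (hcontD.continuousOn (s := Set.Icc (t₀ - 1) (t₀ + 1) ×ˢ K))
    have meas1 : ∀ᶠ t in nhds t₀, AEStronglyMeasurable (fun y => Hdens t y)
        (volume : Measure (Fin n → ℝ)) :=
      Filter.Eventually.of_forall fun t => (hHdC t).aestronglyMeasurable
    have measD : AEStronglyMeasurable (fun y => D t₀ y) (volume : Measure (Fin n → ℝ)) :=
      (hDC t₀).aestronglyMeasurable
    have h_bound : ∀ᵐ (y : Fin n → ℝ), ∀ t ∈ Metric.ball t₀ 1, ‖D t y‖ ≤ K.indicator (fun _ => C) y := by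
      refine Filter.Eventually.of_forall fun y => fun t ht => ?_
      by_cases hy : y ∈ K
      · rw [Set.indicator_of_mem hy]
        refine hC ((t, y) : ℝ × (Fin n → ℝ)) ⟨?_, hy⟩
        rw [Real.ball_eq_Ioo] at ht
        exact ⟨ht.1.le, ht.2.le⟩
      · rw [Set.indicator_of_notMem hy, hD0 t y (hKnorm y hy)]
        simp
    have bound_int : Integrable (K.indicator (fun _ => C)) (volume : Measure (Fin n → ℝ)) := by
      rw [integrable_indicator_iff (measurableSet_closedBall)]
      exact integrableOn_const hKc.measure_lt_top.ne
    have h_diff : ∀ᵐ (y : Fin n → ℝ), ∀ t ∈ Metric.ball t₀ 1,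
        HasDerivAt (fun t => Hdens t y) (D t y) t := by
      refine Filter.Eventually.of_forall fun y t _ => ?_
      rw [hHdens]
      exact key t y
    have res := (hasDerivAt_integral_of_dominated_loc_of_deriv_le (Metric.ball_mem_nhds t₀ zero_lt_one) meas1
      (hIntHd t₀) measD h_bound bound_int h_diff).2
    -- integration by parts: divergence integrates to zero
    have hgcont : ∀ (j : Fin n), Continuous fun y => fderiv ℝ (φ t₀) y (Pi.single j 1) := by
      intro j
      rw [hfun t₀ j]
      exact hsliceC _ (hc1 _) t₀
    have hψjcont : ∀ (j : Fin n), Continuous fun y => fderiv ℝ (ψ t₀) y (Pi.single j 1) := by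
      intro j
      have hfunψ : (fun y => fderiv ℝ (ψ t₀) y (Pi.single j 1))
          = fun y => fderiv ℝ G (t₀, y) ((0 : ℝ), Pi.single j 1) :=
        funext fun y => aux_fderiv_fix_t hψs t₀ y _
      rw [hfunψ]
      exact hsliceC _ (hc1ψ _) t₀
    have hggcont : ∀ (j : Fin n),
        Continuous fun y => fderiv ℝ (fun z => fderiv ℝ (φ t₀) z (Pi.single j 1)) y
          (Pi.single j 1) := by
      intro j
      have h2 : (fun y => fderiv ℝ (fun z => fderiv ℝ (φ t₀) z (Pi.single j 1)) y
          (Pi.single j 1)) = fun y =>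
            fderiv ℝ (fderiv ℝ F) (t₀, y) ((0 : ℝ), Pi.single j 1) ((0 : ℝ), Pi.single j 1) :=
        funext fun y => by rw [hfun t₀ j, aux_fderiv_fderiv hφ]
      rw [h2]
      exact hsliceC _ (hc2 _ _) t₀
    have hψC : Continuous (ψ t₀) := hsliceC _ hψs.continuous t₀
    have IBP : ∀ j : Fin n, (∫ x : Fin n → ℝ, fderiv ℝ
        (fun y => ψ t₀ y * fderiv ℝ (φ t₀) y (Pi.single j 1)) x (Pi.single j 1)) = 0 := by
      intro j
      have hgdiff : Differentiable ℝ (fun y => fderiv ℝ (φ t₀) y (Pi.single j 1)) :=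
        fun y => hgd t₀ y j
      have hψdiff : Differentiable ℝ (ψ t₀) := fun y => hψd t₀ y
      have I1 : Integrable (fun x => ψ t₀ x *
          fderiv ℝ (fun z => fderiv ℝ (φ t₀) z (Pi.single j 1)) x (Pi.single j 1)) :=
        (hψC.mul (hggcont j)).integrable_of_hasCompactSupport
          (hsupp _ fun y hy => by rw [Pi.mul_apply, hψ0 t₀ y hy]; ring)
      have I2 : Integrable (fun x => fderiv ℝ (ψ t₀) x (Pi.single j 1) *
          fderiv ℝ (φ t₀) x (Pi.single j 1)) :=
        ((hψjcont j).mul (hgcont j)).integrable_of_hasCompactSupport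
          (hsupp _ fun y hy => by rw [Pi.mul_apply, hb0 t₀ j y hy]; ring)
      have I3 : Integrable (fun x => ψ t₀ x * fderiv ℝ (φ t₀) x (Pi.single j 1)) :=
        (hψC.mul (hgcont j)).integrable_of_hasCompactSupport
          (hsupp _ fun y hy => by rw [Pi.mul_apply, hψ0 t₀ y hy]; ring)
      have hibp := integral_mul_fderiv_eq_neg_fderiv_mul_of_integrable
        (μ := (volume : Measure (Fin n → ℝ))) I2 I1 I3 (fun x _ => hψdiff x) (fun x _ => hgdiff x)
      have hsum : (fun x : Fin n → ℝ => fderiv ℝ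
          (fun y => ψ t₀ y * fderiv ℝ (φ t₀) y (Pi.single j 1)) x (Pi.single j 1))
          = fun x => ψ t₀ x *
            fderiv ℝ (fun z => fderiv ℝ (φ t₀) z (Pi.single j 1)) x (Pi.single j 1)
            + fderiv ℝ (ψ t₀) x (Pi.single j 1) * fderiv ℝ (φ t₀) x (Pi.single j 1) := by
        funext x
        rw [hdiv t₀ x j]
        ring
      rw [hsum, integral_add I1 I2, hibp]
      ring
    -- per-j integrability of divergence terms
    have Idivj : ∀ j : Fin n, Integrable (fun x : Fin n → ℝ => fderiv ℝ
        (fun y => ψ t₀ y * fderiv ℝ (φ t₀) y (Pi.single j 1)) x (Pi.single j 1)) := by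
      intro j
      have hcont : Continuous (fun x : Fin n → ℝ => fderiv ℝ
          (fun y => ψ t₀ y * fderiv ℝ (φ t₀) y (Pi.single j 1)) x (Pi.single j 1)) := by
        have hsum : (fun x : Fin n → ℝ => fderiv ℝ
            (fun y => ψ t₀ y * fderiv ℝ (φ t₀) y (Pi.single j 1)) x (Pi.single j 1))
            = fun x => ψ t₀ x *
              fderiv ℝ (fun z => fderiv ℝ (φ t₀) z (Pi.single j 1)) x (Pi.single j 1)
              + fderiv ℝ (ψ t₀) x (Pi.single j 1) * fderiv ℝ (φ t₀) x (Pi.single j 1) := by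
          funext x
          rw [hdiv t₀ x j]
          ring
        rw [hsum]
        exact (hψC.mul (hggcont j)).add ((hψjcont j).mul (hgcont j))
      exact hcont.integrable_of_hasCompactSupport (hsupp _ (hg0 t₀ j))
    have IntDiv : Integrable (fun x : Fin n → ℝ => c ^ 2 * exp (-2 * H * t₀) *
        ∑ j : Fin n, fderiv ℝ
          (fun y => ψ t₀ y * fderiv ℝ (φ t₀) y (Pi.single j 1)) x (Pi.single j 1)) :=
      (integrable_finset_sum _ fun j _ => Idivj j).const_mul _
    -- final computation
    rw [hHCfun]
    simp only []
    rw [res.deriv]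
    have hsplit : (fun x : Fin n → ℝ => D t₀ x) = fun x =>
        ((n : ℝ) * H * Hdens t₀ x + c ^ 2 * exp (-2 * H * t₀) *
          ∑ j : Fin n, fderiv ℝ
            (fun y => ψ t₀ y * fderiv ℝ (φ t₀) y (Pi.single j 1)) x (Pi.single j 1))
          - Hstar t₀ x := by
      funext x
      rw [hD, hHdens, hHstar]
    have hI1 : Integrable (fun x : Fin n → ℝ => (n : ℝ) * H * Hdens t₀ x) :=
      (hIntHd t₀).const_mul _
    have hIA : Integrable (fun x : Fin n → ℝ => (n : ℝ) * H * Hdens t₀ x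
        + c ^ 2 * exp (-2 * H * t₀) * ∑ j : Fin n, fderiv ℝ
          (fun y => ψ t₀ y * fderiv ℝ (φ t₀) y (Pi.single j 1)) x (Pi.single j 1)) :=
      hI1.add IntDiv
    rw [hsplit, integral_sub hIA (hIntHs t₀), integral_add hI1 IntDiv, integral_const_mul, integral_const_mul, integral_finset_sum _ (fun j _ => Idivj j)]
    simp only [IBP]
    simp
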